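/- An arbitrary (not necessarily linear or continuous) map u : X → Y that is absolutely p-summing at 0, i.e., satisfies (∑ⱼ ‖u(xⱼ) − u(0)‖^p)^{1/p} ≤ C sup_{φ ∈ B_{X*}} (∑ⱼ |φ(xⱼ)|^p)^{1/p} for all finite families x₁,...,xₘ ∈ X, admits a domination: there is a Borel probability measure μ on (B_{X*}, weak-star) with ‖u(x) − u(0)‖ ≤ C (∫_{B_{X*}} |φ(x)|^p dμ(φ))^{1/p} for all x ∈ X. -/

import Mathlib

open MeasureTheory

noncomputable section

variable {X : Type*} [NormedAddCommGroup X] [NormedSpace ℝ X] [CompleteSpace X]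
variable {Y : Type*} [NormedAddCommGroup Y] [NormedSpace ℝ Y] [CompleteSpace Y]

/-- The closed unit ball of the dual of `X`, with the weak-star topology. -/
def dualBall (X : Type*) [NormedAddCommGroup X] [NormedSpace ℝ X] : Set (WeakDual ℝ X) :=
  {φ | ∀ x : X, ‖φ x‖ ≤ ‖x‖}

instance (X : Type*) [NormedAddCommGroup X] [NormedSpace ℝ X] :
    MeasurableSpace (dualBall X) := borel _

instance (X : Type*) [NormedAddCommGroup X] [NormedSpace ℝ X] :
    BorelSpace (dualBall X) := ⟨rfl⟩

/-- `T` satisfies the absolutely `p`-summing inequality with constant `C`. -/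
def SummingWith (p : ℝ) (T : X →L[ℝ] Y) (C : ℝ) : Prop :=
  ∀ (m : ℕ) (x : Fin m → X),
    (∑ i, ‖T (x i)‖ ^ p) ^ (1 / p) ≤
      C * ⨆ φ : dualBall X, (∑ i, ‖(φ : WeakDual ℝ X) (x i)‖ ^ p) ^ (1 / p)

/-- `T` is absolutely `p`-summing. -/
def AbsolutelySumming (p : ℝ) (T : X →L[ℝ] Y) : Prop :=
  ∃ C : ℝ, 0 ≤ C ∧ SummingWith p T C

/-- The absolutely `p`-summing norm `π_p(T)`. -/
def piNorm (p : ℝ) (T : X →L[ℝ] Y) : ℝ :=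
  sInf {C : ℝ | 0 ≤ C ∧ SummingWith p T C}

/-- `M` is uniformly dominated by the measure `μ` on the dual unit ball. -/
def UniformlyDominatedBy (p : ℝ) (M : Set (X →L[ℝ] Y)) (μ : Measure (dualBall X)) : Prop :=
  ∀ T ∈ M, ∀ x : X, ‖T x‖ ^ p ≤ ∫ φ : dualBall X, ‖(φ : WeakDual ℝ X) x‖ ^ p ∂μ

/-!
For each `x`, the function `φ ↦ ‖u x - u 0‖ ^ p - C ^ p * |φ x| ^ p` is continuous on the
weak-star compact ball `B`; these functions generate an additive monoid `G ⊆ C(B, ℝ)`. Every element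
of `G` is nonpositive somewhere: for the sum over a finite family `(xⱼ)`, evaluate at a point where
`φ ↦ ∑ⱼ |φ xⱼ| ^ p` is maximal and use the summing inequality. Since `u` is not homogeneous, real
coefficients cannot be absorbed into the points `xⱼ`; rounding them down to integers (i.e. repeating
points) shows that the convex cone spanned by `G` still has this property. Hahn–Banach then
separates that cone from the open cone of strictly positive functions, the separating functional is
positive, and the Riesz–Markov–Kakutani theorem represents it by a probability measure `μ` with
`∫ g dμ ≤ 0` for `g ∈ G`; for a single generator this is the domination inequality.
-/

theorem nonpos_of_forall_pos_mul_lt {a b : ℝ} (h : ∀ t : ℝ, 0 < t → t * a < b) : a ≤ 0 := by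
  by_contra! ha
  have := h ((|b| + 1) / a) (by positivity)
  rw [div_mul_cancel₀ _ ha.ne'] at this
  linarith [le_abs_self b]

theorem nonpos_of_forall_nat_mul_le {a M : ℝ} (h : ∀ N : ℕ, N * a ≤ M) : a ≤ 0 := by
  by_contra! ha
  obtain ⟨N, hN⟩ := exists_nat_gt (M / a)
  have := h N
  rw [div_lt_iff₀ ha] at hN
  linarith

theorem Real.rpow_one_div_le_mul_rpow_one_div_iff {a b c p : ℝ} (ha : 0 ≤ a) (hb : 0 ≤ b)
    (hc : 0 ≤ c) (hp : 0 < p) : a ^ (1 / p) ≤ c * b ^ (1 / p) ↔ a ≤ c ^ p * b := by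
  rw [show c * b ^ (1 / p) = (c ^ p * b) ^ (1 / p) by
    rw [Real.mul_rpow (by positivity) hb, one_div, Real.rpow_rpow_inv hc hp.ne']]
  exact Real.rpow_le_rpow_iff ha (by positivity) (by positivity)

theorem AddSubmonoid.exists_fin_sum_eq_of_mem_closure_range {M ι : Type*} [AddCommMonoid M]
    {f : ι → M} {a : M} (ha : a ∈ AddSubmonoid.closure (Set.range f)) :
    ∃ (m : ℕ) (x : Fin m → ι), ∑ j, f (x j) = a := by
  induction ha using AddSubmonoid.closure_induction with
  | mem _ h => obtain ⟨i, rfl⟩ := h; exact ⟨1, fun _ => i, by simp⟩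
  | zero => exact ⟨0, Fin.elim0, by simp⟩
  | add _ _ _ _ h₁ h₂ =>
    obtain ⟨m, x, rfl⟩ := h₁
    obtain ⟨n, y, rfl⟩ := h₂
    exact ⟨m + n, Fin.append x y, by simp [Fin.sum_univ_add]⟩

namespace ContinuousMap

variable {K : Type*} [TopologicalSpace K] [CompactSpace K]

theorem exists_positive_functional_nonpos_on_cone (S : PointedCone ℝ C(K, ℝ))
    (hS : ∀ f ∈ S, ∃ z, f z ≤ 0) :
    ∃ Λ : StrongDual ℝ C(K, ℝ), (∀ f, 0 ≤ f → 0 ≤ Λ f) ∧ Λ 1 = 1 ∧ ∀ f ∈ S, Λ f ≤ 0 := by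
  set P : Set C(K, ℝ) := {f | Set.MapsTo f Set.univ (Set.Ioi 0)}
  have hP_open : IsOpen P := isOpen_setOfPred_mapsTo isCompact_univ isOpen_Ioi
  have hP_convex : Convex ℝ P := by
    intro f hf g hg a b ha hb hab z _
    have hf := hf (Set.mem_univ z); have hg := hg (Set.mem_univ z)
    simp only [Set.mem_Ioi, add_apply, smul_apply, smul_eq_mul] at *
    rcases ha.eq_or_lt with rfl | ha
    · simp_all
    · positivity
  have hPS : Disjoint P S := Set.disjoint_left.mpr fun f hfP hfS => by
    obtain ⟨z, hz⟩ := hS f hfS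
    exact (hfP (Set.mem_univ z)).not_ge hz
  obtain ⟨L, s, hLP, hLS⟩ := geometric_hahn_banach_open hP_convex hP_open S.convex hPS
  have hs : s ≤ 0 := by simpa using hLS 0 S.zero_mem
  have hL_one : L 1 < 0 := (hLP 1 fun z _ => by simp).trans_le hs
  -- `S` and `P` are cones, so the separating bound `s` can be pushed to `0` on both sides.
  have hL_S : ∀ f ∈ S, 0 ≤ L f := fun f hf => by
    refine neg_nonpos.mp (nonpos_of_forall_pos_mul_lt (b := -s + 1) fun t ht => ?_)
    have := hLS _ (S.smul_mem ht.le hf)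
    rw [map_smul, smul_eq_mul] at this
    linarith
  have hL_pos : ∀ f, 0 ≤ f → L f ≤ 0 := fun f hf => by
    refine nonpos_of_forall_pos_mul_lt (b := -L 1) fun t ht => ?_
    have := hLP (t • f + 1) fun z _ => by
      have : 0 ≤ f z := hf z
      simp only [Set.mem_Ioi, add_apply, smul_apply, smul_eq_mul,
        one_apply]
      positivity
    rw [map_add, map_smul, smul_eq_mul] at this
    linarith
  refine ⟨(L 1)⁻¹ • L, fun f hf => ?_, inv_mul_cancel₀ hL_one.ne, fun f hf => ?_⟩
  · exact mul_nonneg_of_nonpos_of_nonpos (inv_nonpos.mpr hL_one.le) (hL_pos f hf)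
  · exact mul_nonpos_of_nonpos_of_nonneg (inv_nonpos.mpr hL_one.le) (hL_S f hf)

theorem exists_nonpos_of_sum_smul {G : AddSubmonoid C(K, ℝ)}
    (hG : ∀ g ∈ G, ∃ z, g z ≤ 0) {n : ℕ} (c : Fin n → ℝ) (hc : ∀ i, 0 ≤ c i)
    (g : Fin n → C(K, ℝ)) (hg : ∀ i, g i ∈ G) : ∃ z, (∑ i, c i • g i) z ≤ 0 := by
  have hK : (Set.univ : Set K).Nonempty := let ⟨z, _⟩ := hG 0 G.zero_mem; ⟨z, trivial⟩
  obtain ⟨z₀, -, hz₀⟩ :=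
    isCompact_univ.exists_isMinOn hK (map_continuous (∑ i, c i • g i)).continuousOn
  refine ⟨z₀, nonpos_of_forall_nat_mul_le (M := ∑ i, ‖g i‖) fun N => ?_⟩
  obtain ⟨z, hz⟩ := hG (∑ i, ⌊N * c i⌋₊ • g i) (G.sum_mem fun i _ => G.nsmul_mem (hg i) _)
  simp only [sum_apply, nsmul_eq_mul, mul_apply, natCast_apply] at hz
  have hround : ∀ i, N * c i * g i z ≤ ⌊N * c i⌋₊ * g i z + ‖g i‖ := fun i => by
    have hfloor := Nat.floor_le (mul_nonneg N.cast_nonneg (hc i))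
    have hfloor' := Nat.lt_floor_add_one (N * c i)
    have hgz := (le_abs_self _).trans ((g i).norm_coe_le_norm z)
    nlinarith [norm_nonneg (g i)]
  calc (N : ℝ) * (∑ i, c i • g i) z₀
      ≤ N * (∑ i, c i • g i) z := by gcongr; exact hz₀ trivial
    _ = ∑ i, N * c i * g i z := by simp [sum_apply, Finset.mul_sum, mul_assoc]
    _ ≤ ∑ i, (⌊N * c i⌋₊ * g i z + ‖g i‖) := Finset.sum_le_sum fun i _ => hround i
    _ ≤ ∑ i, ‖g i‖ := by rw [Finset.sum_add_distrib]; linarith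

theorem exists_nonpos_of_mem_hull {G : AddSubmonoid C(K, ℝ)}
    (hG : ∀ g ∈ G, ∃ z, g z ≤ 0) {f : C(K, ℝ)} (hf : f ∈ PointedCone.hull ℝ (G : Set C(K, ℝ))) :
    ∃ z, f z ≤ 0 := by
  obtain ⟨n, c, g, rfl⟩ := Submodule.mem_span_set'.mp hf
  exact exists_nonpos_of_sum_smul hG _ (fun i => (c i).2) _ fun i => (g i).2

variable [T2Space K] [MeasurableSpace K] [BorelSpace K]

open CompactlySupported in
theorem exists_isProbabilityMeasure_integral_nonpos_on_cone
    (S : PointedCone ℝ C(K, ℝ)) (hS : ∀ f ∈ S, ∃ z, f z ≤ 0) :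
    ∃ μ : Measure K, IsProbabilityMeasure μ ∧ ∀ f ∈ S, ∫ z, f z ∂μ ≤ 0 := by
  obtain ⟨Λ, hΛ_pos, hΛ_one, hΛ_S⟩ := exists_positive_functional_nonpos_on_cone S hS
  let Λc : C_c(K, ℝ) →ₚ[ℝ] ℝ :=
    { toFun f := Λ f.toContinuousMap
      map_add' f g := map_add Λ _ _
      map_smul' c f := map_smul Λ c _
      monotone' f g hfg := by
        simpa using hΛ_pos (g.toContinuousMap - f.toContinuousMap) (sub_nonneg.mpr hfg) }
  have hμ : ∀ f : C(K, ℝ), ∫ z, f z ∂(RealRMK.rieszMeasure Λc) = Λ f := fun f =>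
    RealRMK.integral_rieszMeasure Λc (CompactlySupportedContinuousMap.continuousMapEquiv f)
  refine ⟨RealRMK.rieszMeasure Λc, ⟨?_⟩, fun f hf => (hμ f).trans_le (hΛ_S f hf)⟩
  have := hμ 1
  simp only [one_apply, integral_const, smul_eq_mul, mul_one, hΛ_one] at this
  simpa [Measure.real, ENNReal.toReal_eq_one_iff] using this

theorem exists_isProbabilityMeasure_integral_nonpos {G : AddSubmonoid C(K, ℝ)}
    (hG : ∀ g ∈ G, ∃ z, g z ≤ 0) :
    ∃ μ : Measure K, IsProbabilityMeasure μ ∧ ∀ g ∈ G, ∫ z, g z ∂μ ≤ 0 := by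
  obtain ⟨μ, hμ, hint⟩ := exists_isProbabilityMeasure_integral_nonpos_on_cone _
    fun f hf => exists_nonpos_of_mem_hull hG hf
  exact ⟨μ, hμ, fun g hg => hint g (PointedCone.subset_hull hg)⟩

end ContinuousMap

section DualBall

variable {E : Type*} [NormedAddCommGroup E] [NormedSpace ℝ E]

theorem dualBall_eq_preimage_closedBall :
    dualBall E = WeakDual.toStrongDual ⁻¹' Metric.closedBall 0 1 := by
  ext φ
  simp [dualBall, ContinuousLinearMap.opNorm_le_iff zero_le_one]

instance : CompactSpace (dualBall E) := isCompact_iff_compactSpace.mp <| by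
  rw [dualBall_eq_preimage_closedBall]
  exact WeakDual.isCompact_closedBall 0 1

instance : Nonempty (dualBall E) := ⟨⟨0, fun x => by simp [show (0 : WeakDual ℝ E) x = 0 from rfl]⟩⟩

theorem continuous_dualBall_eval (x : E) : Continuous fun φ : dualBall E => (φ : WeakDual ℝ E) x :=
  (WeakDual.eval_continuous x).comp continuous_subtype_val

end DualBall

section Defect

variable {E F : Type*} [NormedAddCommGroup E] [NormedSpace ℝ E] [SeminormedAddCommGroup F]
  {p : ℝ} (u : E → F) (hp : 0 ≤ p) (C : ℝ)

def summingDefect (x : E) : C(dualBall E, ℝ) where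
  toFun φ := ‖u x - u 0‖ ^ p - C ^ p * ‖(φ : WeakDual ℝ E) x‖ ^ p
  continuous_toFun := continuous_const.sub <| continuous_const.mul <|
    (continuous_dualBall_eval x).norm.rpow_const fun _ => Or.inr hp

theorem summingDefect_apply (x : E) (φ : dualBall E) :
    summingDefect u hp C x φ = ‖u x - u 0‖ ^ p - C ^ p * ‖(φ : WeakDual ℝ E) x‖ ^ p := rfl

theorem integral_summingDefect (μ : Measure (dualBall E)) [IsProbabilityMeasure μ] (x : E) :
    ∫ φ, summingDefect u hp C x φ ∂μ =
      ‖u x - u 0‖ ^ p - C ^ p * ∫ φ : dualBall E, ‖(φ : WeakDual ℝ E) x‖ ^ p ∂μ := by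
  have hint : Integrable (fun φ : dualBall E => ‖(φ : WeakDual ℝ E) x‖ ^ p) μ :=
    ((continuous_dualBall_eval x).norm.rpow_const fun _ => Or.inr hp)
      |>.integrable_of_hasCompactSupport (HasCompactSupport.of_compactSpace _)
  simp only [summingDefect_apply]
  rw [integral_sub (integrable_const _) (hint.const_mul _), integral_const, integral_const_mul]
  simp

variable {u C}

theorem exists_sum_summingDefect_nonpos (hp₀ : 0 < p) (hC : 0 ≤ C) {m : ℕ} {x : Fin m → E}
    (hx : (∑ j, ‖u (x j) - u 0‖ ^ p) ^ (1 / p) ≤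
      C * ⨆ φ : dualBall E, (∑ j, ‖(φ : WeakDual ℝ E) (x j)‖ ^ p) ^ (1 / p)) :
    ∃ φ, (∑ j, summingDefect u hp₀.le C (x j)) φ ≤ 0 := by
  set S := fun φ : dualBall E => ∑ j, ‖(φ : WeakDual ℝ E) (x j)‖ ^ p
  have hS : Continuous S := continuous_finsetSum _ fun j _ =>
    (continuous_dualBall_eval (x j)).norm.rpow_const fun _ => Or.inr hp₀.le
  obtain ⟨φ₀, -, hφ₀⟩ := isCompact_univ.exists_isMaxOn Set.univ_nonempty hS.continuousOn
  have hsup : ⨆ φ, S φ ^ (1 / p) ≤ S φ₀ ^ (1 / p) := ciSup_le fun φ =>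
    Real.rpow_le_rpow (by positivity) (hφ₀ trivial) (by positivity)
  have hle : ∑ j, ‖u (x j) - u 0‖ ^ p ≤ C ^ p * S φ₀ :=
    (Real.rpow_one_div_le_mul_rpow_one_div_iff (by positivity) (by positivity) hC hp₀).mp
      (hx.trans (mul_le_mul_of_nonneg_left hsup hC))
  refine ⟨φ₀, ?_⟩
  simp only [ContinuousMap.sum_apply, summingDefect_apply, Finset.sum_sub_distrib, ← Finset.mul_sum]
  exact sub_nonpos.mpr hle

end Defect

theorem stmt14 (p : ℝ) (hp : 1 ≤ p) (u : X → Y) (C : ℝ) (hC : 0 ≤ C)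
    (hsum : ∀ (m : ℕ) (x : Fin m → X),
      (∑ j, ‖u (x j) - u 0‖ ^ p) ^ (1 / p) ≤
        C * ⨆ φ : dualBall X, (∑ j, ‖(φ : WeakDual ℝ X) (x j)‖ ^ p) ^ (1 / p)) :
    ∃ μ : Measure (dualBall X), IsProbabilityMeasure μ ∧
      ∀ x : X, ‖u x - u 0‖ ≤
        C * (∫ φ : dualBall X, ‖(φ : WeakDual ℝ X) x‖ ^ p ∂μ) ^ (1 / p) := by
  have hp₀ : 0 < p := zero_lt_one.trans_le hp
  obtain ⟨μ, hμ, hμ_int⟩ := ContinuousMap.exists_isProbabilityMeasure_integral_nonpos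
    (G := AddSubmonoid.closure (Set.range (summingDefect u hp₀.le C))) fun g hg => by
      obtain ⟨m, x, rfl⟩ := AddSubmonoid.exists_fin_sum_eq_of_mem_closure_range hg
      exact exists_sum_summingDefect_nonpos hp₀ hC (hsum m x)
  refine ⟨μ, hμ, fun x => ?_⟩
  have hx := hμ_int _ (AddSubmonoid.subset_closure ⟨x, rfl⟩)
  rw [integral_summingDefect, sub_nonpos] at hx
  rw [← Real.rpow_rpow_inv (norm_nonneg (u x - u 0)) hp₀.ne', ← one_div]
  exact (Real.rpow_one_div_le_mul_rpow_one_div_iff (by positivity)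
    (integral_nonneg fun _ => by positivity) hC hp₀).mpr hx
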